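/- arXiv:2209.13489 — 2 statements merged into one kernel-verified Lean document; each statement's English description precedes it below -/
import Mathlib

section
/- Let S, A, U be finite nonempty types (environment states, actions, and reward-machine states), let p : S → A → PMF S be a transition kernel, let γ ∈ [0,1) be a discount factor, let δᵤ : U → S → U be the (label-composed) reward-machine state-update function, and let δᵣ : U → U → (S → A → S → ℝ) be the reward-machine state-reward function. Define the product MDP M_Ψ on state space S × U with transition kernel p'((s,u), a) assigning to (s',u') the probability p s a s' if u' = δᵤ u s' and 0 otherwise, and with reward r'((s,u), a, (s',u')) = δᵣ u u' s a s'. Then for every policy π : S × U → PMF A, every initial environment state s₀ ∈ S, every initial machine state u₀ ∈ U, and every horizon T ∈ ℕ, the expected discounted cumulative reward Σ_{t=0}^{T-1} γ^t · δᵣ(u_t, u_{t+1})(s_t, a_t, s_{t+1}) of π over length-T trajectories generated in the MDP-RM (where a_t ∼ π(s_t,u_t), s_{t+1} ∼ p s_t a_t, and u_{t+1} = δᵤ u_t s_{t+1} deterministically) is equal to the expected discounted cumulative reward Σ_{t=0}^{T-1} γ^t · r'((s_t,u_t), a_t, (s_{t+1},u_{t+1})) of π over length-T trajectories generated in the product MDP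 M_Ψ started at (s₀,u₀) with transition kernel p'. -/
open scoped ENNReal

/-- Expected discounted cumulative reward of policy `π` over length-`T` trajectories
generated in the MDP with reward machine: actions `a_t ∼ π (s_t, u_t)`, next
environment states `s_{t+1} ∼ p s_t a_t`, deterministic machine update
`u_{t+1} = δu u_t s_{t+1}`, and step-`t` reward `δr u_t u_{t+1} s_t a_t s_{t+1}`,
discounted by `γ^t`. -/
noncomputable def mdpRMValue {S A U : Type*} [Fintype S] [Fintype A]
    (p : S → A → PMF S) (γ : ℝ) (δu : U → S → U)
    (δr : U → U → S → A → S → ℝ) (π : S × U → PMF A) : ℕ → S → U → ℝ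
  | 0, _, _ => 0
  | T + 1, s, u =>
      ∑ a : A, (π (s, u) a).toReal *
        ∑ s' : S, (p s a s').toReal *
          (δr u (δu u s') s a s' + γ * mdpRMValue p γ δu δr π T s' (δu u s'))

/-- Expected discounted cumulative reward of policy `π` over length-`T` trajectories
generated in the product MDP on `S × U` with transition kernel `p'` and reward `r'`. -/
noncomputable def prodMDPValue {S A U : Type*} [Fintype S] [Fintype A] [Fintype U]
    (p' : S × U → A → PMF (S × U)) (γ : ℝ)
    (r' : S × U → A → S × U → ℝ) (π : S × U → PMF A) : ℕ → S × U → ℝ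
  | 0, _ => 0
  | T + 1, x =>
      ∑ a : A, (π x a).toReal *
        ∑ y : S × U, (p' x a y).toReal *
          (r' x a y + γ * prodMDPValue p' γ r' π T y)

theorem sum_toReal_mul_eq_of_apply_eq_ite {S U : Type*} [Fintype S] [Fintype U] [DecidableEq U]
    {q : PMF (S × U)} {μ : PMF S} {g : S → U} (hq : ∀ s u, q (s, u) = if u = g s then μ s else 0)
    (f : S × U → ℝ) :
    ∑ y, (q y).toReal * f y = ∑ s, (μ s).toReal * f (s, g s) := by
  rw [Fintype.sum_prod_type]
  refine Finset.sum_congr rfl fun s _ => ?_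
  simp only [hq, apply_ite ENNReal.toReal, ENNReal.toReal_zero, ite_mul, zero_mul,
    Finset.sum_ite_eq', Finset.mem_univ, if_true]

theorem mdpRM_prodMDP_expected_reward_eq_general
    {S A U : Type*} [Fintype S] [Fintype A] [Fintype U] [DecidableEq U]
    (p : S → A → PMF S) (γ : ℝ)
    (δu : U → S → U) (δr : U → U → S → A → S → ℝ)
    (p' : S × U → A → PMF (S × U))
    (hp' : ∀ (s : S) (u : U) (a : A) (s' : S) (u' : U),
      p' (s, u) a (s', u') = if u' = δu u s' then p s a s' else 0)
    (r' : S × U → A → S × U → ℝ)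
    (hr' : ∀ (s : S) (u : U) (a : A) (s' : S) (u' : U),
      r' (s, u) a (s', u') = δr u u' s a s')
    (π : S × U → PMF A) (s₀ : S) (u₀ : U) (T : ℕ) :
    mdpRMValue p γ δu δr π T s₀ u₀ = prodMDPValue p' γ r' π T (s₀, u₀) := by
  induction T generalizing s₀ u₀ with
  | zero => rfl
  | succ T ih =>
    refine Finset.sum_congr rfl fun a _ => ?_
    rw [sum_toReal_mul_eq_of_apply_eq_ite (hp' s₀ u₀ a)]
    simp only [hr', ih]

/-- Any policy achieves the same expected (discounted, finite-horizon) reward in the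
MDP-RM `Ψ` as in the product MDP `M_Ψ` on `S × U`. -/
theorem mdpRM_prodMDP_expected_reward_eq
    {S A U : Type*} [Fintype S] [Fintype A] [Fintype U] [DecidableEq U]
    [Nonempty S] [Nonempty A] [Nonempty U]
    (p : S → A → PMF S) (γ : ℝ) (hγ : 0 ≤ γ) (hγ1 : γ < 1)
    (δu : U → S → U) (δr : U → U → S → A → S → ℝ)
    (p' : S × U → A → PMF (S × U))
    (hp' : ∀ (s : S) (u : U) (a : A) (s' : S) (u' : U),
      p' (s, u) a (s', u') = if u' = δu u s' then p s a s' else 0)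
    (r' : S × U → A → S × U → ℝ)
    (hr' : ∀ (s : S) (u : U) (a : A) (s' : S) (u' : U),
      r' (s, u) a (s', u') = δr u u' s a s')
    (π : S × U → PMF A) (s₀ : S) (u₀ : U) (T : ℕ) :
    mdpRMValue p γ δu δr π T s₀ u₀ = prodMDPValue p' γ r' π T (s₀, u₀) :=
  mdpRM_prodMDP_expected_reward_eq_general p γ δu δr p' hp' r' hr' π s₀ u₀ T
end

section
/- Fix a finite nonempty set S of states, a horizon T ∈ ℕ with T ≥ 1, a finite nonempty set 𝒯 of trajectories where each trajectory τ ∈ 𝒯 is a function Fin T → S giving its state s_t^τ at each timestep, a temperature α > 0, and a parameterized reward r : (Fin n → ℝ) → S → ℝ such that for each s ∈ S the map θ ↦ r θ s is differentiable. For θ : Fin n → ℝ define the soft-optimal trajectory distribution ρ_θ(τ) = exp((1/α) Σ_{t} r θ (s_t^τ)) / Σ_{τ'} exp((1/α) Σ_t r θ (s_t^{τ'})), the induced state marginal ρ_θ(s) = (1/T) Σ_τ ρ_θ(τ) · |{t : s_t^τ = s}|, and let ρ_E : S → ℝ be an expert state marginal. Let f : ℝ → ℝ be differentiable and define h_f(u)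 = f(u) − f'(u)·u and the objective L_f(θ) = Σ_{s ∈ S} f(ρ_E(s)/ρ_θ(s)) · ρ_θ(s). Assume ρ_θ(s) > 0 for all s ∈ S and all θ. Then for each index i, the partial derivative of L_f with respect to θ_i exists and equals (1/(αT)) times the covariance, under τ ∼ ρ_θ, of the random variables X(τ) = Σ_t h_f(ρ_E(s_t^τ)/ρ_θ(s_t^τ)) and Y(τ) = Σ_t ∂r θ (s_t^τ)/∂θ_i, where cov(X,Y) = E_{ρ_θ}[X·Y] − E_{ρ_θ}[X]·E_{ρ_θ}[Y]. -/
/-- The soft-optimal trajectory distribution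
`ρ_θ(τ) = exp((1/α) Σ_t r θ (s_t^τ)) / Σ_{τ'} exp((1/α) Σ_t r θ (s_t^{τ'}))`. -/
noncomputable def softTrajDist {S Tr : Type*} [Fintype Tr] {n T : ℕ}
    (st : Tr → Fin T → S) (α : ℝ) (r : (Fin n → ℝ) → S → ℝ)
    (θ : Fin n → ℝ) (τ : Tr) : ℝ :=
  Real.exp ((1 / α) * ∑ t, r θ (st τ t)) /
    ∑ τ' : Tr, Real.exp ((1 / α) * ∑ t, r θ (st τ' t))

/-- The state marginal `ρ_θ(s) = (1/T) Σ_τ ρ_θ(τ) · |{t : s_t^τ = s}|` induced by the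
soft-optimal trajectory distribution. -/
noncomputable def softStateMarginal {S Tr : Type*} [Fintype Tr] [DecidableEq S] {n T : ℕ}
    (st : Tr → Fin T → S) (α : ℝ) (r : (Fin n → ℝ) → S → ℝ)
    (θ : Fin n → ℝ) (s : S) : ℝ :=
  (1 / (T : ℝ)) * ∑ τ : Tr, softTrajDist st α r θ τ *
      ((Finset.univ.filter fun t : Fin T => st τ t = s).card : ℝ)

/-- `h_f(u) = f(u) − f'(u)·u`. -/
noncomputable def hAux (f : ℝ → ℝ) (u : ℝ) : ℝ := f u - deriv f u * u

private lemma fIRL_count_sum {S : Type*} [Fintype S] [DecidableEq S] {T : ℕ}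
    (g : Fin T → S) (φ : S → ℝ) :
    ∑ s : S, ((Finset.univ.filter fun t : Fin T => g t = s).card : ℝ) * φ s = ∑ t, φ (g t) := by
  rw [← Finset.sum_fiberwise' Finset.univ g φ]
  refine Finset.sum_congr rfl fun s _ => ?_
  rw [Finset.sum_const, nsmul_eq_mul]

/-- f-IRL analytic gradient: the partial derivative of the f-divergence objective
`L_f(θ) = Σ_s f(ρ_E(s)/ρ_θ(s)) · ρ_θ(s)` with respect to `θ i` exists and equals
`(1/(αT)) · cov_{τ ∼ ρ_θ}(Σ_t h_f(ρ_E(s_t^τ)/ρ_θ(s_t^τ)), Σ_t ∂r_θ(s_t^τ)/∂θ_i)`,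
where `cov(X, Y) = E[X·Y] − E[X]·E[Y]` under the finitely supported distribution
`ρ_θ` on trajectories. -/
theorem fIRL_analytic_gradient
    {S Tr : Type*} [Fintype S] [Nonempty S] [DecidableEq S]
    [Fintype Tr] [Nonempty Tr]
    {n T : ℕ} (hT : 1 ≤ T) (st : Tr → Fin T → S)
    (α : ℝ) (hα : 0 < α)
    (r : (Fin n → ℝ) → S → ℝ)
    (hr : ∀ s : S, Differentiable ℝ fun θ : Fin n → ℝ => r θ s)
    (ρE : S → ℝ)
    (f : ℝ → ℝ) (hf : Differentiable ℝ f)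
    (hpos : ∀ (θ : Fin n → ℝ) (s : S), 0 < softStateMarginal st α r θ s)
    (θ : Fin n → ℝ) (i : Fin n) :
    HasDerivAt
      (fun x : ℝ =>
        ∑ s : S, f (ρE s / softStateMarginal st α r (Function.update θ i x) s) *
          softStateMarginal st α r (Function.update θ i x) s)
      ((1 / (α * T)) *
        ((∑ τ : Tr, softTrajDist st α r θ τ *
            ((∑ t, hAux f (ρE (st τ t) / softStateMarginal st α r θ (st τ t))) *
              ∑ t, deriv (fun x : ℝ => r (Function.update θ i x) (st τ t)) (θ i))) -
          (∑ τ : Tr, softTrajDist st α r θ τ *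
              ∑ t, hAux f (ρE (st τ t) / softStateMarginal st α r θ (st τ t))) *
            ∑ τ : Tr, softTrajDist st α r θ τ *
              ∑ t, deriv (fun x : ℝ => r (Function.update θ i x) (st τ t)) (θ i)))
      (θ i) := by
  classical
  have hθself : Function.update θ i (θ i) = θ := Function.update_eq_self i θ
  -- local abbreviations (all at the base point, in `θ`-form)
  let e : Tr → ℝ := fun τ => Real.exp ((1 / α) * ∑ t, r θ (st τ t))
  let Zv : ℝ := ∑ τ' : Tr, e τ'
  let Dr : Tr → ℝ := fun τ => ∑ t, deriv (fun x : ℝ => r (Function.update θ i x) (st τ t)) (θ i)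
  let c : Tr → S → ℝ := fun τ s => ((Finset.univ.filter fun t : Fin T => st τ t = s).card : ℝ)
  let Z' : ℝ := ∑ τ : Tr, e τ * ((1 / α) * Dr τ)
  let p' : Tr → ℝ := fun τ => (e τ * ((1 / α) * Dr τ) * Zv - e τ * Z') / Zv ^ 2
  let M : S → ℝ := fun s => softStateMarginal st α r θ s
  let M' : S → ℝ := fun s => (1 / (T : ℝ)) * ∑ τ : Tr, p' τ * c τ s
  have hZvpos : 0 < Zv := Finset.sum_pos (fun τ _ => Real.exp_pos _) Finset.univ_nonempty
  have hZvne : Zv ≠ 0 := hZvpos.ne'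
  have hMpos : ∀ s, 0 < M s := fun s => hpos θ s
  -- derivative of the reward in the i-th coordinate
  have hrD : ∀ s : S, HasDerivAt (fun x : ℝ => r (Function.update θ i x) s)
      (deriv (fun x : ℝ => r (Function.update θ i x) s) (θ i)) (θ i) := by
    intro s
    have hupd : Differentiable ℝ (fun x : ℝ => Function.update θ i x) := by
      apply differentiable_pi.mpr
      intro j
      by_cases h : j = i
      · subst h
        simp only [Function.update_self]
        exact differentiable_id
      · simp only [Function.update_of_ne h]
        exact differentiable_const _
    exact (((hr s).comp hupd) (θ i)).hasDerivAt
  -- derivative of the exponential weight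
  have hE : ∀ τ : Tr, HasDerivAt
      (fun x : ℝ => Real.exp ((1 / α) * ∑ t, r (Function.update θ i x) (st τ t)))
      (e τ * ((1 / α) * Dr τ)) (θ i) := by
    intro τ
    have h1 : HasDerivAt (fun x : ℝ => ∑ t, r (Function.update θ i x) (st τ t)) (Dr τ) (θ i) :=
      HasDerivAt.fun_sum fun t _ => hrD (st τ t)
    have h2 := (h1.const_mul (1 / α)).exp
    simpa only [hθself] using h2
  -- derivative of the partition function
  have hZ : HasDerivAt
      (fun x : ℝ => ∑ τ' : Tr, Real.exp ((1 / α) * ∑ t, r (Function.update θ i x) (st τ' t)))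
      Z' (θ i) := HasDerivAt.fun_sum fun τ _ => hE τ
  -- derivative of the trajectory distribution
  have hp : ∀ τ : Tr, HasDerivAt
      (fun x : ℝ => softTrajDist st α r (Function.update θ i x) τ) (p' τ) (θ i) := by
    intro τ
    have hne : (∑ τ' : Tr, Real.exp ((1 / α) * ∑ t, r (Function.update θ i (θ i)) (st τ' t))) ≠ 0 := by
      rw [hθself]; exact hZvne
    have h := (hE τ).fun_div hZ hne
    rw [hθself] at h; exact h
  -- derivative of the state marginal
  have hM : ∀ s : S, HasDerivAt
      (fun x : ℝ => softStateMarginal st α r (Function.update θ i x) s) (M' s) (θ i) := by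
    intro s
    have h := HasDerivAt.fun_sum (fun τ (_ : τ ∈ Finset.univ) => (hp τ).mul_const (c τ s))
    exact h.const_mul (1 / (T : ℝ))
  -- derivative of each state's contribution to the objective
  have hterm : ∀ s : S, HasDerivAt
      (fun x : ℝ => f (ρE s / softStateMarginal st α r (Function.update θ i x) s) *
        softStateMarginal st α r (Function.update θ i x) s)
      (deriv f (ρE s / M s) * ((0 * M s - ρE s * M' s) / M s ^ 2) * M s
        + f (ρE s / M s) * M' s) (θ i) := by
    intro s
    have hMne' : softStateMarginal st α r (Function.update θ i (θ i)) s ≠ 0 := by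
      rw [hθself]; exact (hMpos s).ne'
    have hq := (hasDerivAt_const (θ i) (ρE s)).fun_div (hM s) hMne'
    have hfq := (hf _).hasDerivAt.comp (θ i) hq
    have h := hfq.fun_mul (hM s)
    simpa only [hθself, Function.comp] using h
  have hL : HasDerivAt
      (fun x : ℝ => ∑ s : S, f (ρE s / softStateMarginal st α r (Function.update θ i x) s) *
        softStateMarginal st α r (Function.update θ i x) s)
      (∑ s : S, (deriv f (ρE s / M s) * ((0 * M s - ρE s * M' s) / M s ^ 2) * M s
        + f (ρE s / M s) * M' s)) (θ i) := HasDerivAt.fun_sum fun s _ => hterm s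
  -- the value identity
  have hval : (∑ s : S, (deriv f (ρE s / M s) * ((0 * M s - ρE s * M' s) / M s ^ 2) * M s
        + f (ρE s / M s) * M' s))
      = ((1 / (α * T)) *
        ((∑ τ : Tr, softTrajDist st α r θ τ *
            ((∑ t, hAux f (ρE (st τ t) / softStateMarginal st α r θ (st τ t))) *
              ∑ t, deriv (fun x : ℝ => r (Function.update θ i x) (st τ t)) (θ i))) -
          (∑ τ : Tr, softTrajDist st α r θ τ *
              ∑ t, hAux f (ρE (st τ t) / softStateMarginal st α r θ (st τ t))) *
            ∑ τ : Tr, softTrajDist st α r θ τ *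
              ∑ t, deriv (fun x : ℝ => r (Function.update θ i x) (st τ t)) (θ i))) := by
    have hsoft : ∀ τ : Tr, softTrajDist st α r θ τ = e τ / Zv := fun τ => rfl
    have hstate : ∀ s : S, softStateMarginal st α r θ s = M s := fun s => rfl
    have hDreq : ∀ τ : Tr,
        (∑ t, deriv (fun x : ℝ => r (Function.update θ i x) (st τ t)) (θ i)) = Dr τ :=
      fun τ => rfl
    have hstep1 : ∀ s : S, deriv f (ρE s / M s) * ((0 * M s - ρE s * M' s) / M s ^ 2) * M s
        + f (ρE s / M s) * M' s = M' s * hAux f (ρE s / M s) := by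
      intro s
      have h0 : M s ≠ 0 := (hMpos s).ne'
      simp only [hAux]
      field_simp
      ring
    have hstep2 : (∑ s : S, M' s * hAux f (ρE s / M s))
        = (1 / (T : ℝ)) * ∑ τ : Tr, p' τ * ∑ t, hAux f (ρE (st τ t) / M (st τ t)) := by
      unfold M'
      calc (∑ s : S, ((1 / (T : ℝ)) * ∑ τ : Tr, p' τ * c τ s) * hAux f (ρE s / M s))
          = ∑ s : S, ∑ τ : Tr, 1 / (T : ℝ) * (p' τ * c τ s * hAux f (ρE s / M s)) := by
            refine Finset.sum_congr rfl fun s _ => ?_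
            rw [mul_assoc, Finset.sum_mul, Finset.mul_sum]
        _ = ∑ τ : Tr, ∑ s : S, 1 / (T : ℝ) * (p' τ * c τ s * hAux f (ρE s / M s)) :=
            Finset.sum_comm
        _ = ∑ τ : Tr, 1 / (T : ℝ) * (p' τ * ∑ t, hAux f (ρE (st τ t) / M (st τ t))) := by
            refine Finset.sum_congr rfl fun τ _ => ?_
            rw [← fIRL_count_sum (st τ) (fun s => hAux f (ρE s / M s)), Finset.mul_sum,
              Finset.mul_sum]
            refine Finset.sum_congr rfl fun s _ => ?_
            unfold c
            ring
        _ = (1 / (T : ℝ)) * ∑ τ : Tr, p' τ * ∑ t, hAux f (ρE (st τ t) / M (st τ t)) := by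
            rw [Finset.mul_sum]
    have hC : Z' = 1 / α * (∑ τ : Tr, e τ / Zv * Dr τ) * Zv := by
      unfold Z'
      calc (∑ τ : Tr, e τ * (1 / α * Dr τ))
          = ∑ τ : Tr, 1 / α * (e τ / Zv * Dr τ) * Zv := by
            refine Finset.sum_congr rfl fun τ _ => ?_
            field_simp
        _ = 1 / α * (∑ τ : Tr, e τ / Zv * Dr τ) * Zv := by
            rw [← Finset.sum_mul, ← Finset.mul_sum]
    have hps : (∑ τ : Tr, p' τ * ∑ t, hAux f (ρE (st τ t) / M (st τ t)))
        = (1 / α * ∑ τ : Tr, e τ / Zv *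
            ((∑ t, hAux f (ρE (st τ t) / M (st τ t))) * Dr τ))
          - (1 / α * ∑ τ : Tr, e τ / Zv * Dr τ) *
            ∑ τ : Tr, e τ / Zv * ∑ t, hAux f (ρE (st τ t) / M (st τ t)) := by
      rw [Finset.mul_sum, Finset.mul_sum, ← Finset.sum_sub_distrib]
      refine Finset.sum_congr rfl fun τ _ => ?_
      unfold p'
      rw [hC]
      field_simp
    simp only [hsoft, hstate, hDreq, hstep1]
    rw [hstep2, hps]
    ring
  rw [hval] at hL
  exact hL
end
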